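/- arXiv:2104.09761 — 2 statements merged into one kernel-verified Lean document; each statement's English description precedes it below -/
import Mathlib

section
/- Let n > 2 be an even integer and let N be an odd integer with N > 100n + 100. Let B ⊆ ℤ/Nℤ be the image of the set of integers {1, 2, 3, N−6} ∪ {(N−n+5)/2, (N−n+7)/2, …, (N+n−5)/2}, where the second set consists of the n−4 consecutive integers from (N−n+5)/2 to (N+n−5)/2 (and is empty when n = 4). If α ∈ (ℤ/Nℤ)^× is a unit with α·B = B (as subsets of ℤ/Nℤ), then α = 1. -/
/-!
Since `1 ∈ B`, the unit `α = α • 1` is the residue of some `a` in the defining set of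
integers, and `α • 2`, `α • (N - 6)` must again lie in `B`. Reducing these products to
representatives in `[0, N)` settles every `a ≠ 1`: for `a = 2, 3, N - 6` the product with
`N - 6 ≡ -6` is `N - 12`, `N - 18`, `36`. For `a` in the middle block, `2a - N` is odd
because `N` is; if `2a < N` then `2a` lies above the block and differs from `N - 6` in
parity, and otherwise `t = 2a - N` is small, so `α • 2 = t ∈ B` forces `t ∈ {1, 3}`,
whereupon `α • (N - 6) = N - 3t` is `N - 3` or `N - 9`, not in `B`.
-/

namespace ZMod

theorem natCast_mem_image_natCast_iff {N : ℕ} {S : Set ℕ} (hS : ∀ k ∈ S, k < N)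
    {k : ℕ} (hk : k < N) : (k : ZMod N) ∈ (Nat.cast '' S : Set (ZMod N)) ↔ k ∈ S := by
  refine ⟨?_, Set.mem_image_of_mem _⟩
  rintro ⟨j, hj, hjk⟩
  rw [natCast_eq_natCast_iff', Nat.mod_eq_of_lt (hS j hj), Nat.mod_eq_of_lt hk] at hjk
  exact hjk ▸ hj

theorem natCast_mul_natCast_eq_sub {N : ℕ} (a c q : ℕ) (h : q * N ≤ c * a) :
    (a : ZMod N) * c = ((c * a - q * N : ℕ) : ZMod N) := by
  push_cast [Nat.cast_sub h]
  linear_combination (q : ZMod N) * natCast_self N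

theorem natCast_mul_natCast_self_sub_eq_sub {N : ℕ} (a c q : ℕ) (hc : c ≤ N)
    (h : c * a ≤ q * N) :
    (a : ZMod N) * ((N - c : ℕ) : ZMod N) = ((q * N - c * a : ℕ) : ZMod N) := by
  push_cast [Nat.cast_sub hc, Nat.cast_sub h]
  linear_combination (a - q : ZMod N) * natCast_self N

end ZMod

def bSet (n N : ℕ) : Set ℕ :=
  {1, 2, 3, N - 6} ∪ (fun i : ℕ => (N - n + 5) / 2 + i) '' {i : ℕ | i < n - 4}

theorem mem_bSet_iff {n N k : ℕ} :
    k ∈ bSet n N ↔ k = 1 ∨ k = 2 ∨ k = 3 ∨ k = N - 6 ∨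
      (N - n + 5) / 2 ≤ k ∧ k < (N - n + 5) / 2 + (n - 4) := by
  simp only [bSet, Set.mem_union, Set.mem_insert_iff, Set.mem_singleton_iff, Set.mem_image,
    Set.mem_ofPred_eq]
  constructor
  · rintro (h | ⟨i, hi, rfl⟩)
    · tauto
    · omega
  · rintro (h | h | h | h | ⟨hlo, hhi⟩)
    all_goals first | (left; tauto) | (right; exact ⟨k - (N - n + 5) / 2, by omega, by omega⟩)

section
variable {n N : ℕ} (hNn : 100 * n + 100 < N)
include hNn

theorem lt_of_mem_bSet {k : ℕ} (hk : k ∈ bSet n N) : k < N := by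
  rw [mem_bSet_iff] at hk
  omega

theorem natCast_mem_bSet_iff {k : ℕ} (hk : k < N) :
    (k : ZMod N) ∈ (Nat.cast '' bSet n N : Set (ZMod N)) ↔ k ∈ bSet n N :=
  ZMod.natCast_mem_image_natCast_iff (fun _ => lt_of_mem_bSet hNn) hk

theorem eq_one_of_mul_mem_bSet (hN : Odd N) {a : ℕ} (ha : a ∈ bSet n N)
    (h2 : (a : ZMod N) * (2 : ℕ) ∈ (Nat.cast '' bSet n N : Set (ZMod N)))
    (h6 : (a : ZMod N) * ((N - 6 : ℕ) : ZMod N) ∈ (Nat.cast '' bSet n N : Set (ZMod N))) :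
    a = 1 := by
  obtain ⟨s, rfl⟩ := hN
  rw [mem_bSet_iff] at ha
  rcases ha with ha | ha | ha | ha | ha
  · exact ha
  all_goals exfalso
  · rw [ZMod.natCast_mul_natCast_self_sub_eq_sub a 6 1 (by omega) (by omega),
      natCast_mem_bSet_iff hNn (by omega), mem_bSet_iff] at h6
    omega
  · rw [ZMod.natCast_mul_natCast_self_sub_eq_sub a 6 1 (by omega) (by omega),
      natCast_mem_bSet_iff hNn (by omega), mem_bSet_iff] at h6
    omega
  · rw [ZMod.natCast_mul_natCast_self_sub_eq_sub a 6 6 (by omega) (by omega),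
      natCast_mem_bSet_iff hNn (by omega), mem_bSet_iff] at h6
    omega
  · rcases lt_or_ge (2 * a) (2 * s + 1) with hlt | hge
    · rw [ZMod.natCast_mul_natCast_eq_sub a 2 0 (by omega),
        natCast_mem_bSet_iff hNn (by omega), mem_bSet_iff] at h2
      omega
    · rw [ZMod.natCast_mul_natCast_eq_sub a 2 1 (by omega),
        natCast_mem_bSet_iff hNn (by omega), mem_bSet_iff] at h2
      rw [ZMod.natCast_mul_natCast_self_sub_eq_sub a 6 4 (by omega) (by omega),
        natCast_mem_bSet_iff hNn (by omega), mem_bSet_iff] at h6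
      omega
end

theorem unit_fixing_b_set_is_one_even_general (n N : ℕ)
    (hN : Odd N) (hNn : 100 * n + 100 < N)
    (B : Set (ZMod N))
    (hB : B = (fun k : ℕ => (k : ZMod N)) ''
      ({1, 2, 3, N - 6} ∪ (fun i : ℕ => (N - n + 5) / 2 + i) '' {i : ℕ | i < n - 4}))
    (α : (ZMod N)ˣ) (hα : (fun x : ZMod N => (α : ZMod N) * x) '' B = B) :
    α = 1 := by
  replace hB : B = Nat.cast '' bSet n N := hB
  have mul_mem {x : ZMod N} (hx : x ∈ B) : (α : ZMod N) * x ∈ B :=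
    hα ▸ Set.mem_image_of_mem _ hx
  have natCast_mem {k : ℕ} (hk : k ∈ bSet n N) : (k : ZMod N) ∈ B :=
    hB ▸ Set.mem_image_of_mem _ hk
  obtain ⟨a, ha, hαa⟩ : (α : ZMod N) ∈ Nat.cast '' bSet n N := by
    simpa [hB] using mul_mem (natCast_mem (k := 1) (by simp [mem_bSet_iff]))
  have ha1 : a = 1 := eq_one_of_mul_mem_bSet hNn hN ha
    (hαa ▸ hB ▸ mul_mem (natCast_mem (by simp [mem_bSet_iff])))
    (hαa ▸ hB ▸ mul_mem (natCast_mem (by simp [mem_bSet_iff])))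
  exact Units.ext (by rw [← hαa, ha1, Nat.cast_one, Units.val_one])

/-- Let `n > 2` be even and `N` odd with `N > 100n + 100`. Let
`B ⊆ ℤ/Nℤ` be the image of `{1, 2, 3, N-6} ∪ {(N-n+5)/2, (N-n+7)/2, …, (N+n-5)/2}`,
the latter being the `n - 4` consecutive integers starting at `(N-n+5)/2`.
If a unit `α` of `ℤ/Nℤ` satisfies `α • B = B`, then `α = 1`. -/
theorem unit_fixing_b_set_is_one_even (n N : ℕ) (hn : Even n) (hn2 : 2 < n)
    (hN : Odd N) (hNn : 100 * n + 100 < N)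
    (B : Set (ZMod N))
    (hB : B = (fun k : ℕ => (k : ZMod N)) ''
      ({1, 2, 3, N - 6} ∪ (fun i : ℕ => (N - n + 5) / 2 + i) '' {i : ℕ | i < n - 4}))
    (α : (ZMod N)ˣ) (hα : (fun x : ZMod N => (α : ZMod N) * x) '' B = B) :
    α = 1 :=
  unit_fixing_b_set_is_one_even_general n N hN hNn B hB α hα
end

section
/- Let F be a finite field of cardinality q, let ψ: F → ℂ be a nontrivial additive character, let N ≥ 3 be an odd integer, let χ be a ℂ-valued multiplicative character of F of order exactly N, let n ≥ 2 be an integer, and let b_1, …, b_n be pairwise distinct nonzero elements of ℤ/Nℤ. Then ∏_{j=1}^{n} ∏_{s ∈ ℤ/Nℤ, s ∉ {−b_1, …, −b_n}} g(χ^{s + b_j}, ψ) = q^{n(N−n)/2} in ℂ. -/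
/-!
Substituting `t = s + b j`, the product becomes `∏ t, g(χ ^ t) ^ m t` with
`m t = #{x ∈ B | x - t ∉ B}` for `B = {b j}`. Counting complements in `B` gives
`m (-t) = m t`, and `m 0 = 0`. For `t ≠ 0`, `g(χ ^ t) g(χ ^ (-t)) = χ ^ t (-1) q = q` because a
character of odd order is even. As `N` is odd, `t ↦ -t` has no fixed point besides `0`, so
after dividing every factor by a square root `c` of `q` the product collapses to `1`: the
original product is `c ^ (n (N - n)) = q ^ (n (N - n) / 2)`.
-/

open Finset Pointwise

theorem eq_zero_of_neg_eq_self_of_odd_card {G : Type*} [AddGroup G] [Fintype G]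
    (hG : Odd (Fintype.card G)) {e : G} (he : -e = e) : e = 0 := by
  have h2 : addOrderOf e ∣ 2 :=
    addOrderOf_dvd_of_nsmul_eq_zero (by simpa [two_nsmul, he] using neg_add_cancel e)
  exact AddMonoid.addOrderOf_eq_one_iff.mp <|
    Nat.eq_one_of_dvd_coprimes (Nat.coprime_two_left.mpr hG) h2 addOrderOf_dvd_card

section PairingProduct

variable {G : Type*} [AddCommGroup G] [DecidableEq G]

theorem card_filter_sub_neg_notMem (B : Finset G) (e : G) :
    #{x ∈ B | x - -e ∉ B} = #{x ∈ B | x - e ∉ B} := by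
  have translate : #{x ∈ B | x + e ∈ B} = #{x ∈ B | x - e ∈ B} := by
    refine card_nbij' (· + e) (· - e) ?_ ?_ ?_ ?_ <;> intro x hx <;> simp_all
  have h₁ := card_filter_add_card_filter_not (s := B) (fun x => x + e ∈ B)
  have h₂ := card_filter_add_card_filter_not (s := B) (fun x => x - e ∈ B)
  simp only [sub_neg_eq_add]
  omega

variable [Fintype G]

theorem prod_prod_sdiff_neg_add_eq_prod_pow {M : Type*} [CommMonoid M] (B : Finset G)
    (f : G → M) :
    ∏ x ∈ B, ∏ s ∈ univ \ -B, f (s + x) = ∏ e, f e ^ #{x ∈ B | x - e ∉ B} := by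
  have inner (x : G) : ∏ s ∈ univ \ -B, f (s + x) = ∏ e, if x - e ∉ B then f e else 1 := by
    rw [← prod_filter]
    refine prod_nbij' (· + x) (· - x) ?_ ?_ ?_ ?_ ?_ <;> intro s hs <;> simp_all
  rw [prod_congr rfl fun x _ => inner x, prod_comm]
  exact prod_congr rfl fun e _ => by rw [← prod_filter, prod_const]

theorem prod_pow_card_filter_sub_notMem_eq_one {M : Type*} [CommMonoid M]
    (hG : Odd (Fintype.card G)) (B : Finset G) {f : G → M} (hf : ∀ e ≠ 0, f e * f (-e) = 1) :
    ∏ e, f e ^ #{x ∈ B | x - e ∉ B} = 1 := by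
  have at_zero : #{x ∈ B | x - 0 ∉ B} = 0 := by simp [filter_eq_empty_iff]
  refine prod_ninvolution (fun e => -e) (fun e => ?_) (fun e he => ?_) (fun _ => mem_univ _) neg_neg
  · rcases eq_or_ne e 0 with rfl | he
    · simp only [neg_zero, at_zero, pow_zero, mul_one]
    · rw [card_filter_sub_neg_notMem, ← mul_pow, hf e he, one_pow]
  · contrapose! he
    rw [eq_zero_of_neg_eq_self_of_odd_card hG he, at_zero, pow_zero]

theorem prod_prod_sdiff_neg_add_eq_pow {K : Type*} [Field K] (hG : Odd (Fintype.card G))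
    (B : Finset G) {f : G → K} {c : K} (hc : c ≠ 0) (hf : ∀ e ≠ 0, f e * f (-e) = c * c) :
    ∏ x ∈ B, ∏ s ∈ univ \ -B, f (s + x) = c ^ (#B * (Fintype.card G - #B)) := by
  have hS : #(univ \ -B) = Fintype.card G - #B := by
    rw [← compl_eq_univ_sdiff, card_compl, card_neg]
  have normalized : ∏ x ∈ B, ∏ s ∈ univ \ -B, f (s + x) / c = 1 := by
    rw [prod_prod_sdiff_neg_add_eq_prod_pow B (f · / c)]
    refine prod_pow_card_filter_sub_notMem_eq_one hG B fun e he => ?_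
    rw [div_mul_div_comm, hf e he, div_self (mul_ne_zero hc hc)]
  simp_rw [prod_div_distrib, prod_const, hS, ← pow_mul'] at normalized
  exact div_eq_one_iff_eq (pow_ne_zero _ hc) |>.mp normalized

end PairingProduct

theorem pow_val_neg_eq_inv {G : Type*} [Group G] {x : G} {N : ℕ} [NeZero N] (hx : orderOf x = N)
    (a : ZMod N) : x ^ (-a).val = (x ^ a.val)⁻¹ := by
  refine eq_inv_of_mul_eq_one_left ?_
  rw [← pow_add, ← pow_mod_orderOf, hx, ← ZMod.val_add, neg_add_cancel, ZMod.val_zero,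
    pow_zero]

section GaussSum

variable {F R : Type*} [Field F] [Fintype F] [CommRing R] [IsDomain R]

theorem gaussSum_mul_gaussSum_inv_eq_card {χ : MulChar F R} (hχ : χ ≠ 1)
    (hχ_neg : χ (-1) = 1) {ψ : AddChar F R} (hψ : ψ.IsPrimitive) :
    gaussSum χ ψ * gaussSum χ⁻¹ ψ = Fintype.card F := by
  rw [← mul_gaussSum_inv_eq_gaussSum χ⁻¹ ψ, MulChar.inv_apply', inv_neg_one, hχ_neg,
    one_mul]
  exact gaussSum_mul_gaussSum_eq_card hχ hψ

theorem gaussSum_pow_val_mul_gaussSum_pow_val_neg {N : ℕ} [NeZero N] (hN : Odd N)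
    {χ : MulChar F R} (hχ : orderOf χ = N) {ψ : AddChar F R} (hψ : ψ.IsPrimitive)
    {e : ZMod N} (he : e ≠ 0) :
    gaussSum (χ ^ e.val) ψ * gaussSum (χ ^ (-e).val) ψ = Fintype.card F := by
  rw [pow_val_neg_eq_inv hχ]
  refine gaussSum_mul_gaussSum_inv_eq_card ?_ ?_ hψ
  · exact pow_ne_one_of_lt_orderOf ((ZMod.val_ne_zero e).mpr he) (hχ ▸ e.val_lt)
  · refine MulChar.val_neg_one_eq_one_of_odd_order hN ?_
    have hχN : χ ^ N = 1 := hχ ▸ pow_orderOf_eq_one χ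
    rw [pow_right_comm, hχN, one_pow]

end GaussSum

theorem prod_prod_gaussSum_eq_card_pow_general (F : Type*) [Field F] [Fintype F]
    (ψ : AddChar F ℂ) (hψ : ψ ≠ 1)
    (N : ℕ) [NeZero N] (hNodd : Odd N)
    (χ : MulChar F ℂ) (hχ : orderOf χ = N)
    (n : ℕ) (b : Fin n → ZMod N) (hbinj : Function.Injective b) :
    ∏ j : Fin n, ∏ s ∈ (Finset.univ \ Finset.image (fun j => -(b j)) Finset.univ),
        gaussSum (χ ^ (s + b j).val) ψ =
      (Fintype.card F : ℂ) ^ (n * (N - n) / 2) := by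
  classical
  set B := univ.image b
  have hB : #B = n := by rw [card_image_of_injective _ hbinj, card_univ, Fintype.card_fin]
  have hnegB : univ.image (fun j => -(b j)) = -B := by
    rw [← image_neg_eq_neg, image_image]; rfl
  obtain ⟨c, hc⟩ := IsAlgClosed.exists_eq_mul_self (Fintype.card F : ℂ)
  have hc0 : c ≠ 0 := by rintro rfl; simp at hc
  obtain ⟨k, hk⟩ : Even (n * (N - n)) := by
    rcases Nat.even_or_odd n with h | h
    · exact h.mul_right _
    · exact (Nat.Odd.sub_odd hNodd h).mul_left _
  have reindex : ∏ j, ∏ s ∈ univ \ -B, gaussSum (χ ^ (s + b j).val) ψ =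
      ∏ x ∈ B, ∏ s ∈ univ \ -B, gaussSum (χ ^ (s + x).val) ψ :=
    (prod_image (f := fun x => ∏ s ∈ univ \ -B, gaussSum (χ ^ (s + x).val) ψ)
      fun x _ y _ h => hbinj h).symm
  have pairing (e : ZMod N) (he : e ≠ 0) :
      gaussSum (χ ^ e.val) ψ * gaussSum (χ ^ (-e).val) ψ = c * c :=
    hc ▸ gaussSum_pow_val_mul_gaussSum_pow_val_neg hNodd hχ (.of_ne_one hψ) he
  rw [hnegB, reindex, prod_prod_sdiff_neg_add_eq_pow (by rwa [ZMod.card]) B hc0 pairing,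
    ZMod.card, hB, hk, ← two_mul, Nat.mul_div_cancel_left _ two_pos, pow_mul, sq, hc]

/-- Let `F` be a finite field with `q` elements, `ψ` a nontrivial additive
character of `F` with values in `ℂ`, `N ≥ 3` odd, `χ` a multiplicative character of `F` of
order exactly `N`, `n ≥ 2`, and `b 1, …, b n` pairwise distinct nonzero elements of `ℤ/Nℤ`.
Then `∏_{j=1}^{n} ∏_{s ∉ {-b 1, …, -b n}} g(χ^(s + b j), ψ) = q ^ (n(N-n)/2)`. -/
theorem prod_prod_gaussSum_eq_card_pow (F : Type*) [Field F] [Fintype F]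
    (ψ : AddChar F ℂ) (hψ : ψ ≠ 1)
    (N : ℕ) [NeZero N] (hN : 3 ≤ N) (hNodd : Odd N)
    (χ : MulChar F ℂ) (hχ : orderOf χ = N)
    (n : ℕ) (hn : 2 ≤ n) (b : Fin n → ZMod N) (hbinj : Function.Injective b)
    (hbne : ∀ j, b j ≠ 0) :
    ∏ j : Fin n, ∏ s ∈ (Finset.univ \ Finset.image (fun j => -(b j)) Finset.univ),
        gaussSum (χ ^ (s + b j).val) ψ =
      (Fintype.card F : ℂ) ^ (n * (N - n) / 2) :=
  prod_prod_gaussSum_eq_card_pow_general F ψ hψ N hNodd χ hχ n b hbinj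
end
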